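/- arXiv:2208.13655 — 2 statements merged into one kernel-verified Lean document; each statement's English description precedes it below -/
import Mathlib

section
/- Let G be a group with elements σ₁, …, σ_k satisfying the braid relations. Let δ_n = σ_n σ_{n−1} ⋯ σ₁ and γ_n = σ₁ σ₂ ⋯ σ_n. Then for every t with 1 ≤ t < k, δ_k^t = δ_{k−1}^{t−1} · δ_k · γ_{t−1}, where γ₀ = 1. -/
/-- `deltaB σ n = σ n * σ (n-1) * ... * σ 1` (with `deltaB σ 0 = 1`). -/
def deltaB {G : Type*} [Group G] (σ : ℕ → G) (n : ℕ) : G :=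
  ((List.range n).map (fun i => σ (n - i))).prod

/-- `gammaB σ n = σ 1 * σ 2 * ... * σ n` (with `gammaB σ 0 = 1`). -/
def gammaB {G : Type*} [Group G] (σ : ℕ → G) (n : ℕ) : G :=
  ((List.range n).map (fun i => σ (i + 1))).prod

/-- `ascB σ a c = σ a * σ (a+1) * ... * σ (a+c)`. -/
def ascB {G : Type*} [Group G] (σ : ℕ → G) (a c : ℕ) : G :=
  ((List.range (c + 1)).map (fun i => σ (a + i))).prod

section Aux

variable {G : Type*} [Group G] (σ : ℕ → G)

lemma deltaB_zero : deltaB σ 0 = 1 := by simp [deltaB]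

lemma gammaB_zero : gammaB σ 0 = 1 := by simp [gammaB]

lemma deltaB_succ (n : ℕ) : deltaB σ (n + 1) = σ (n + 1) * deltaB σ n := by
  unfold deltaB
  rw [List.range_succ_eq_map, List.map_cons, List.prod_cons, List.map_map]
  simp [Function.comp_def, Nat.succ_sub_succ]

lemma gammaB_succ (n : ℕ) : gammaB σ (n + 1) = gammaB σ n * σ (n + 1) := by
  unfold gammaB
  rw [List.range_succ, List.map_append, List.prod_append]
  simp

lemma gammaB_succ_left (n : ℕ) :
    gammaB σ (n + 1) = σ 1 * gammaB (fun i => σ (i + 1)) n := by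
  unfold gammaB
  rw [List.range_succ_eq_map, List.map_cons, List.prod_cons, List.map_map]
  simp [Function.comp_def]

lemma deltaB_eq_shift (n : ℕ) :
    deltaB σ (n + 1) = deltaB (fun i => σ (i + 1)) n * σ 1 := by
  induction n with
  | zero => simp [deltaB_succ, deltaB_zero]
  | succ m ih =>
      rw [deltaB_succ, ih, deltaB_succ (fun i => σ (i + 1)) m, mul_assoc]

lemma commute_deltaB (x : G) (n : ℕ) (h : ∀ i, 1 ≤ i → i ≤ n → Commute x (σ i)) :
    Commute x (deltaB σ n) := by
  induction n with
  | zero => rw [deltaB_zero]; exact Commute.one_right x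
  | succ m ih =>
      rw [deltaB_succ]
      exact (h (m + 1) (Nat.succ_le_succ (Nat.zero_le m)) le_rfl).mul_right
        (ih fun i h1 h2 => h i h1 (h2.trans (Nat.le_succ m)))

lemma deltaB_split (j m : ℕ) :
    deltaB σ (j + m) = deltaB (fun i => σ (j + i)) m * deltaB σ j := by
  induction m with
  | zero => simp [deltaB_zero]
  | succ p ih =>
      rw [← Nat.add_assoc, deltaB_succ, ih, deltaB_succ (fun i => σ (j + i)) p,
        mul_assoc, Nat.add_assoc]

end Aux

section Braid

variable {G : Type*} [Group G] (σ : ℕ → G) (k : ℕ)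
variable (hcomm : ∀ i j, 1 ≤ i → i + 1 < j → j ≤ k → σ i * σ j = σ j * σ i)
variable (hbraid : ∀ i, 1 ≤ i → i + 1 ≤ k →
      σ i * σ (i + 1) * σ i = σ (i + 1) * σ i * σ (i + 1))

include hcomm hbraid in
lemma shiftB : ∀ j, 1 ≤ j → j + 1 ≤ k →
    σ j * deltaB σ k = deltaB σ k * σ (j + 1) := by
  intro j hj hjk
  obtain ⟨m, rfl⟩ : ∃ m, k = (j + 1) + m := ⟨k - (j + 1), (Nat.add_sub_cancel' hjk).symm⟩
  obtain ⟨j', rfl⟩ : ∃ j', j = j' + 1 := ⟨j - 1, (Nat.succ_pred_eq_of_pos hj).symm⟩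
  have hsplit := deltaB_split σ (j' + 2) m
  have hT : Commute (σ (j' + 1)) (deltaB (fun i => σ (j' + 2 + i)) m) := by
    apply commute_deltaB
    intro i h1 h2
    exact (hcomm (j' + 1) (j' + 2 + i) (by omega) (by omega) (by omega))
  have hB : Commute (σ (j' + 2)) (deltaB σ j') := by
    apply commute_deltaB
    intro i h1 h2
    exact ((hcomm i (j' + 2) h1 (by omega) (by omega))).symm
  have hbr := hbraid (j' + 1) (by omega) (by omega)
  have e1 : deltaB σ (j' + 1 + 1 + m) =
      deltaB (fun i => σ (j' + 2 + i)) m * (σ (j' + 2) * (σ (j' + 1) * deltaB σ j')) := by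
    rw [show j' + 1 + 1 + m = j' + 2 + m by ring, hsplit, deltaB_succ, deltaB_succ]
  rw [e1]
  set T := deltaB (fun i => σ (j' + 2 + i)) m with hTdef
  set B := deltaB σ j' with hBdef
  calc σ (j' + 1) * (T * (σ (j' + 2) * (σ (j' + 1) * B)))
      = T * (σ (j' + 1) * σ (j' + 2) * σ (j' + 1)) * B := by
        rw [← mul_assoc, hT.eq]; group
    _ = T * (σ (j' + 2) * σ (j' + 1) * σ (j' + 2)) * B := by rw [hbr]
    _ = T * (σ (j' + 2) * (σ (j' + 1) * B)) * σ (j' + 1 + 1) := by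
        have := hB.eq
        show T * (σ (j' + 2) * σ (j' + 1) * σ (j' + 2)) * B
            = T * (σ (j' + 2) * (σ (j' + 1) * B)) * σ (j' + 2)
        calc T * (σ (j' + 2) * σ (j' + 1) * σ (j' + 2)) * B
            = T * (σ (j' + 2) * σ (j' + 1)) * (σ (j' + 2) * B) := by group
          _ = T * (σ (j' + 2) * σ (j' + 1)) * (B * σ (j' + 2)) := by rw [hB.eq]
          _ = T * (σ (j' + 2) * (σ (j' + 1) * B)) * σ (j' + 2) := by group

include hcomm hbraid in
lemma gamma_shiftB : ∀ s, s + 1 ≤ k →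
    gammaB σ s * deltaB σ k = deltaB σ k * gammaB (fun i => σ (i + 1)) s := by
  intro s
  induction s with
  | zero => intro _; simp [gammaB_zero]
  | succ p ih =>
      intro hs
      rw [gammaB_succ, gammaB_succ (fun i => σ (i + 1)) p, mul_assoc,
        shiftB σ k hcomm hbraid (p + 1) (by omega) (by omega), ← mul_assoc,
        ih (by omega), mul_assoc]

include hcomm hbraid in
lemma delta_shiftB : ∀ s, s + 1 ≤ k →
    deltaB σ s * deltaB σ k = deltaB σ k * deltaB (fun i => σ (i + 1)) s := by
  intro s
  induction s with
  | zero => intro _; simp [deltaB_zero]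
  | succ p ih =>
      intro hs
      rw [deltaB_succ, deltaB_succ (fun i => σ (i + 1)) p, mul_assoc,
        ih (by omega), ← mul_assoc,
        shiftB σ k hcomm hbraid (p + 1) (by omega) (by omega), mul_assoc]

include hcomm hbraid in
lemma coreB (hk : 1 ≤ k) :
    deltaB σ k * deltaB σ k = deltaB σ (k - 1) * deltaB σ k * σ 1 := by
  obtain ⟨k', rfl⟩ : ∃ k', k = k' + 1 := ⟨k - 1, (Nat.succ_pred_eq_of_pos hk).symm⟩
  have h1 := delta_shiftB σ (k' + 1) hcomm hbraid k' (by omega)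
  have h2 := deltaB_eq_shift σ k'
  simp only [Nat.add_sub_cancel]
  rw [h1, mul_assoc, ← h2]

end Braid

theorem stmt5 {G : Type*} [Group G] (σ : ℕ → G) (k : ℕ)
    (hcomm : ∀ i j, 1 ≤ i → i + 1 < j → j ≤ k → σ i * σ j = σ j * σ i)
    (hbraid : ∀ i, 1 ≤ i → i + 1 ≤ k →
      σ i * σ (i + 1) * σ i = σ (i + 1) * σ i * σ (i + 1)) :
    ∀ t, 1 ≤ t → t < k →
      (deltaB σ k) ^ t = (deltaB σ (k - 1)) ^ (t - 1) * deltaB σ k * gammaB σ (t - 1) := by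
  intro t ht
  induction t, ht using Nat.le_induction with
  | base => intro _; simp [gammaB_zero]
  | succ s hs ih =>
      intro hsk
      have hslt : s < k := by omega
      have hk1 : 1 ≤ k := by omega
      rw [pow_succ, ih hslt]
      have hg := gamma_shiftB σ k hcomm hbraid (s - 1) (by omega)
      have hc := coreB σ k hcomm hbraid hk1
      obtain ⟨p, rfl⟩ : ∃ p, s = p + 1 := ⟨s - 1, (Nat.succ_pred_eq_of_pos hs).symm⟩
      simp only [Nat.add_sub_cancel] at hg ⊢
      calc deltaB σ (k - 1) ^ p * deltaB σ k * gammaB σ p * deltaB σ k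
          = deltaB σ (k - 1) ^ p * deltaB σ k *
              (gammaB σ p * deltaB σ k) := by group
        _ = deltaB σ (k - 1) ^ p * (deltaB σ k * deltaB σ k) *
              gammaB (fun i => σ (i + 1)) p := by rw [hg]; group
        _ = deltaB σ (k - 1) ^ p * (deltaB σ (k - 1) * deltaB σ k * σ 1) *
              gammaB (fun i => σ (i + 1)) p := by rw [hc]
        _ = deltaB σ (k - 1) ^ (p + 1) * deltaB σ k *
              (σ 1 * gammaB (fun i => σ (i + 1)) p) := by
              rw [pow_succ]; group
        _ = deltaB σ (k - 1) ^ (p + 1) * deltaB σ k * gammaB σ (p + 1) := by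
              rw [gammaB_succ_left]
end

section
/- Let G be a group with elements σ₁, …, σ_{w−1} satisfying the braid relations, and set γ = σ₁σ₂⋯σ_{w−1}. For integers b with 1 ≤ b ≤ w − 1, n ≥ 1, and t ≥ 1, the element (σ_{w−b} σ_{w−b+1} ⋯ σ_{w−1})^n · γ^t is conjugate in G to (σ₁ σ₂ ⋯ σ_b)^n · γ^t. -/
section Aux

variable {G : Type*} [Group G]

lemma ascB_zero (σ : ℕ → G) (a : ℕ) : ascB σ a 0 = σ a := by
  simp [ascB, List.range_succ]

lemma ascB_succ (σ : ℕ → G) (a c : ℕ) :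
    ascB σ a (c + 1) = ascB σ a c * σ (a + (c + 1)) := by
  simp [ascB, List.range_succ, mul_assoc]

lemma ascB_split (σ : ℕ → G) (a c d : ℕ) :
    ascB σ a (c + d + 1) = ascB σ a c * ascB σ (a + c + 1) d := by
  induction d with
  | zero => simp [ascB_succ, ascB_zero, ← Nat.add_assoc]
  | succ d ih =>
      have h1 : c + (d + 1) + 1 = (c + d + 1) + 1 := by omega
      have h2 : a + (c + d + 1 + 1) = (a + c + 1) + (d + 1) := by omega
      rw [h1, ascB_succ, ih, ascB_succ σ (a + c + 1) d, h2, mul_assoc]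

lemma comm_ascB (σ : ℕ → G) (j a : ℕ) :
    ∀ c, (∀ k, a ≤ k → k ≤ a + c → σ k * σ j = σ j * σ k) →
    ascB σ a c * σ j = σ j * ascB σ a c := by
  intro c
  induction c with
  | zero =>
      intro h
      rw [ascB_zero]
      exact h a le_rfl (Nat.le_add_right _ _)
  | succ c ih =>
      intro h
      rw [ascB_succ, mul_assoc, h (a + (c + 1)) (by omega) (by omega), ← mul_assoc,
        ih (fun k hk1 hk2 => h k hk1 (by omega)), mul_assoc]

lemma ascB_mul_top (σ : ℕ → G) (w : ℕ)
    (hcomm : ∀ i j, 1 ≤ i → i + 1 < j → j ≤ w - 1 → σ i * σ j = σ j * σ i)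
    (hbraid : ∀ i, 1 ≤ i → i + 1 ≤ w - 1 →
      σ i * σ (i + 1) * σ i = σ (i + 1) * σ i * σ (i + 1))
    (i : ℕ) (hi : 1 ≤ i) (him : i + 1 ≤ w - 1) :
    ascB σ 1 i * σ i = σ (i + 1) * ascB σ 1 i := by
  rcases Nat.lt_or_ge i 2 with h2 | h2
  · have : i = 1 := by omega
    subst this
    rw [ascB_succ, ascB_zero]
    have hb := hbraid 1 le_rfl him
    norm_num [mul_assoc] at hb ⊢
    exact hb
  · obtain ⟨j, rfl⟩ : ∃ j, i = j + 2 := ⟨i - 2, by omega⟩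
    have e1 : 1 + (j + 1) = j + 2 := by omega
    have e2 : 1 + (j + 1 + 1) = j + 3 := by omega
    have e3 : j + 2 + 1 = j + 3 := by omega
    have hb := hbraid (j + 2) (by omega) (by omega)
    rw [e3] at hb
    have hc : ascB σ 1 j * σ (j + 3) = σ (j + 3) * ascB σ 1 j :=
      comm_ascB σ (j + 3) 1 j (fun k hk1 hk2 =>
        hcomm k (j + 3) hk1 (by omega) (by omega))
    rw [ascB_succ, ascB_succ] at *
    rw [e1, e2, e3]
    calc ascB σ 1 j * σ (j + 2) * σ (j + 3) * σ (j + 2)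
        = ascB σ 1 j * (σ (j + 2) * σ (j + 3) * σ (j + 2)) := by
          simp [mul_assoc]
      _ = ascB σ 1 j * (σ (j + 3) * (σ (j + 2) * σ (j + 3))) := by
          rw [show σ (j + 3) * (σ (j + 2) * σ (j + 3)) = σ (j + 3) * σ (j + 2) * σ (j + 3) by
            rw [mul_assoc], ← hb]
      _ = (ascB σ 1 j * σ (j + 3)) * (σ (j + 2) * σ (j + 3)) := by
          simp [mul_assoc]
      _ = σ (j + 3) * (ascB σ 1 j * σ (j + 2) * σ (j + 3)) := by
          rw [hc]; simp [mul_assoc]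

lemma gamma_mul_sigma (σ : ℕ → G) (w : ℕ)
    (hcomm : ∀ i j, 1 ≤ i → i + 1 < j → j ≤ w - 1 → σ i * σ j = σ j * σ i)
    (hbraid : ∀ i, 1 ≤ i → i + 1 ≤ w - 1 →
      σ i * σ (i + 1) * σ i = σ (i + 1) * σ i * σ (i + 1))
    (i : ℕ) (hi : 1 ≤ i) (him : i + 1 ≤ w - 1) :
    ascB σ 1 (w - 2) * σ i = σ (i + 1) * ascB σ 1 (w - 2) := by
  rcases eq_or_lt_of_le him with heq | hlt
  · have : w - 2 = i := by omega
    rw [this]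
    exact ascB_mul_top σ w hcomm hbraid i hi him
  · have hsplit : w - 2 = i + (w - i - 3) + 1 := by omega
    have e : 1 + i + 1 = i + 2 := by omega
    have hc : ascB σ (i + 2) (w - i - 3) * σ i = σ i * ascB σ (i + 2) (w - i - 3) :=
      comm_ascB σ i (i + 2) (w - i - 3) (fun k hk1 hk2 =>
        (hcomm i k hi (by omega) (by omega)).symm)
    rw [hsplit, ascB_split, e]
    calc ascB σ 1 i * ascB σ (i + 2) (w - i - 3) * σ i
        = ascB σ 1 i * (σ i * ascB σ (i + 2) (w - i - 3)) := by
          rw [mul_assoc, hc]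
      _ = (ascB σ 1 i * σ i) * ascB σ (i + 2) (w - i - 3) := by
          rw [mul_assoc]
      _ = σ (i + 1) * (ascB σ 1 i * ascB σ (i + 2) (w - i - 3)) := by
          rw [ascB_mul_top σ w hcomm hbraid i hi him, mul_assoc]

lemma gamma_mul_ascB (σ : ℕ → G) (w : ℕ)
    (hcomm : ∀ i j, 1 ≤ i → i + 1 < j → j ≤ w - 1 → σ i * σ j = σ j * σ i)
    (hbraid : ∀ i, 1 ≤ i → i + 1 ≤ w - 1 →
      σ i * σ (i + 1) * σ i = σ (i + 1) * σ i * σ (i + 1))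
    (a : ℕ) (ha : 1 ≤ a) :
    ∀ c, a + c + 1 ≤ w - 1 →
    ascB σ 1 (w - 2) * ascB σ a c = ascB σ (a + 1) c * ascB σ 1 (w - 2) := by
  intro c
  induction c with
  | zero =>
      intro h
      rw [ascB_zero, ascB_zero]
      exact gamma_mul_sigma σ w hcomm hbraid a ha (by omega)
  | succ c ih =>
      intro h
      have e : a + (c + 1) + 1 = (a + 1) + (c + 1) := by omega
      rw [ascB_succ, ← mul_assoc, ih (by omega), mul_assoc,
        gamma_mul_sigma σ w hcomm hbraid (a + (c + 1)) (by omega) (by omega),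
        ← mul_assoc, e, ← ascB_succ]

lemma gammaPow_mul_ascB (σ : ℕ → G) (w : ℕ)
    (hcomm : ∀ i j, 1 ≤ i → i + 1 < j → j ≤ w - 1 → σ i * σ j = σ j * σ i)
    (hbraid : ∀ i, 1 ≤ i → i + 1 ≤ w - 1 →
      σ i * σ (i + 1) * σ i = σ (i + 1) * σ i * σ (i + 1))
    (a c : ℕ) (ha : 1 ≤ a) :
    ∀ k, a + c + k ≤ w - 1 →
    (ascB σ 1 (w - 2)) ^ k * ascB σ a c = ascB σ (a + k) c * (ascB σ 1 (w - 2)) ^ k := by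
  intro k
  induction k with
  | zero => intro _; simp
  | succ k ih =>
      intro h
      have e : a + k + 1 = a + (k + 1) := by omega
      rw [pow_succ', mul_assoc, ih (by omega), ← mul_assoc,
        gamma_mul_ascB σ w hcomm hbraid (a + k) (by omega) c (by omega),
        e, mul_assoc, ← pow_succ']

lemma gammaB_eq_ascB (σ : ℕ → G) (m : ℕ) (hm : 1 ≤ m) :
    gammaB σ m = ascB σ 1 (m - 1) := by
  unfold gammaB ascB
  rw [Nat.sub_add_cancel hm]
  simp [Nat.add_comm]

end Aux

theorem stmt9 {G : Type*} [Group G] (σ : ℕ → G) (w b n t : ℕ)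
    (hb1 : 1 ≤ b) (hb2 : b ≤ w - 1) (hn : 1 ≤ n) (ht : 1 ≤ t)
    (hcomm : ∀ i j, 1 ≤ i → i + 1 < j → j ≤ w - 1 → σ i * σ j = σ j * σ i)
    (hbraid : ∀ i, 1 ≤ i → i + 1 ≤ w - 1 →
      σ i * σ (i + 1) * σ i = σ (i + 1) * σ i * σ (i + 1)) :
    IsConj ((ascB σ (w - b) (b - 1)) ^ n * (gammaB σ (w - 1)) ^ t)
      ((gammaB σ b) ^ n * (gammaB σ (w - 1)) ^ t) := by
  have hw : 2 ≤ w := by omega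
  have hγ : gammaB σ (w - 1) = ascB σ 1 (w - 2) := by
    rw [gammaB_eq_ascB σ (w - 1) (by omega)]
    congr 1
  have hgb : gammaB σ b = ascB σ 1 (b - 1) := gammaB_eq_ascB σ b hb1
  set k := w - 1 - b with hk
  have key : (ascB σ 1 (w - 2)) ^ k * ascB σ 1 (b - 1)
      = ascB σ (1 + k) (b - 1) * (ascB σ 1 (w - 2)) ^ k :=
    gammaPow_mul_ascB σ w hcomm hbraid 1 (b - 1) le_rfl k (by omega)
  have e : 1 + k = w - b := by omega
  rw [e] at key
  rw [hγ, hgb]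
  apply IsConj.symm
  refine isConj_iff.mpr ⟨(ascB σ 1 (w - 2)) ^ k, ?_⟩
  have h1 : SemiconjBy ((ascB σ 1 (w - 2)) ^ k) ((ascB σ 1 (b - 1)) ^ n)
      ((ascB σ (w - b) (b - 1)) ^ n) := SemiconjBy.pow_right key n
  have h2 : SemiconjBy ((ascB σ 1 (w - 2)) ^ k) ((ascB σ 1 (w - 2)) ^ t)
      ((ascB σ 1 (w - 2)) ^ t) := (Commute.refl _).pow_pow k t
  have h3 := h1.mul_right h2
  rw [h3.eq, mul_inv_cancel_right]
end
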